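/- arXiv:1210.1392 — 4 statements merged into one kernel-verified Lean document; each statement's English description precedes it below -/
import Mathlib

section
/- Let $1<p,q<\infty$ and $r\in\mathbb{N}$. Then there exists a constant $c=c(p,q)>0$ such that for all $x=(x_1,\dots,x_r)\in\mathbb{R}^r$: $\left(\sum_{i=1}^r |1-x_i|^p\right)^{q/p} \ge \frac{r^{q/p}}{2} + c\left(\sum_{i=1}^r |x_i|^p\right)^{q/p} - q\, r^{q/p-1}\sum_{i=1}^r x_i$. -/
/-!
Write `u = ‖1 - x‖_p`, `A = ‖x‖_p`, `ρ = r^(1/p)` and `s = r^(1/p - 1) ∑ xᵢ`. Hölder's inequality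
gives `ρ - s ≤ u` and `-s ≤ A`, Minkowski's gives `A ≤ u + ρ`, and the claim becomes
`ρ^q/2 + c A^q - q ρ^(q-1) s ≤ u^q`. The tangent line of `t ↦ t^q` at `ρ` gives
`ρ^q - q ρ^(q-1) s ≤ u^q`, which suffices unless `ρ ≤ ε A` for a small `ε = ε(q)`. In that case
`u ≥ (1 - ε) A` gives `A^q/2 ≤ u^q` by Bernoulli, while the linear term is at most `A^q/4`.
-/

open Real Finset Filter Topology

theorem sum_le_card_rpow_mul_Lp {ι : Type*} (s : Finset ι) {p : ℝ} (hp : 1 ≤ p) (y : ι → ℝ) :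
    ∑ i ∈ s, y i ≤ (#s : ℝ) ^ (1 - 1 / p) * (∑ i ∈ s, |y i| ^ p) ^ (1 / p) := by
  have h := inner_le_weight_mul_Lp_of_nonneg s hp (fun _ ↦ 1) (fun i ↦ |y i|)
    (fun _ ↦ zero_le_one) (fun i ↦ abs_nonneg _)
  simp only [one_mul, sum_const, nsmul_eq_mul, mul_one] at h
  rw [one_div]
  exact (sum_le_sum fun i _ ↦ le_abs_self (y i)).trans h

theorem rpow_sub_mul_rpow_sub_one_mul_le_rpow {q u ρ s : ℝ} (hq : 1 ≤ q) (hu : 0 ≤ u)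
    (hρ : 0 < ρ) (h : ρ - s ≤ u) : ρ ^ q - q * ρ ^ (q - 1) * s ≤ u ^ q := by
  have hρq : 0 < ρ ^ q := rpow_pos_of_pos hρ q
  have bernoulli := one_add_mul_self_le_rpow_one_add
    (by linarith [div_nonneg hu hρ.le] : -1 ≤ u / ρ - 1) hq
  rw [add_sub_cancel, div_rpow hu hρ.le, le_div_iff₀ hρq] at bernoulli
  have tangent : q * ρ ^ (q - 1) * (-s) ≤ q * ρ ^ (q - 1) * (u - ρ) := by gcongr; linarith
  calc ρ ^ q - q * ρ ^ (q - 1) * s = ρ ^ q + q * ρ ^ (q - 1) * (-s) := by ring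
    _ ≤ ρ ^ q + q * ρ ^ (q - 1) * (u - ρ) := by linarith
    _ = (1 + q * (u / ρ - 1)) * ρ ^ q := by rw [rpow_sub_one hρ.ne']; field_simp
    _ ≤ u ^ q := bernoulli

theorem exists_pos_mul_le_and_mul_rpow_le {q : ℝ} (hq : 1 < q) :
    ∃ ε > 0, q * ε ≤ 1 / 2 ∧ q * ε ^ (q - 1) ≤ 1 / 4 := by
  have h₁ : ∀ᶠ ε in 𝓝 (0 : ℝ), q * ε < 1 / 2 :=
    (continuous_const.mul continuous_id).continuousAt.eventually_lt continuousAt_const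
      (by norm_num)
  have h₂ : ∀ᶠ ε in 𝓝 (0 : ℝ), q * ε ^ (q - 1) < 1 / 4 :=
    (continuousAt_const.mul (continuousAt_rpow_const 0 (q - 1) (Or.inr (by linarith))))
      |>.eventually_lt continuousAt_const (by simp [zero_rpow (by linarith : q - 1 ≠ 0)])
  obtain ⟨ε, ⟨h₁, h₂⟩, hε⟩ := ((h₁.and h₂).filter_mono nhdsWithin_le_nhds |>.and
    (self_mem_nhdsWithin : Set.Ioi (0 : ℝ) ∈ 𝓝[>] 0)).exists
  exact ⟨ε, hε, h₁.le, h₂.le⟩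

section LargeNorm

variable {q ε u A ρ s : ℝ}

theorem half_rpow_le_rpow_of_le_add (hq : 1 ≤ q) (hε : 0 ≤ ε) (hqε : q * ε ≤ 1 / 2)
    (hA : 0 ≤ A) (hρA : ρ ≤ ε * A) (hAu : A ≤ u + ρ) : A ^ q / 2 ≤ u ^ q := by
  have hε1 : ε ≤ 1 / 2 := by nlinarith
  have bernoulli := one_add_mul_self_le_rpow_one_add (by linarith : -1 ≤ -ε) hq
  rw [← sub_eq_add_neg] at bernoulli
  calc A ^ q / 2 = A ^ q * (1 / 2) := by ring
    _ ≤ A ^ q * (1 - ε) ^ q := by gcongr; linarith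
    _ = ((1 - ε) * A) ^ q := by rw [mul_rpow (by linarith) hA, mul_comm]
    _ ≤ u ^ q := by gcongr <;> nlinarith

theorem neg_mul_rpow_sub_one_mul_le (hq : 1 ≤ q) (hε : 0 ≤ ε) (hqε : q * ε ^ (q - 1) ≤ 1 / 4)
    (hρ : 0 < ρ) (hρA : ρ ≤ ε * A) (hsA : -s ≤ A) : -(q * ρ ^ (q - 1) * s) ≤ A ^ q / 4 := by
  have hA : 0 < A := pos_of_mul_pos_right (hρ.trans_le hρA) hε
  calc -(q * ρ ^ (q - 1) * s) = q * ρ ^ (q - 1) * (-s) := by ring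
    _ ≤ q * ρ ^ (q - 1) * A := by gcongr
    _ ≤ q * (ε * A) ^ (q - 1) * A := by gcongr
    _ = q * ε ^ (q - 1) * A ^ q := by
        rw [mul_rpow hε hA.le, rpow_sub_one hA.ne']; field_simp
    _ ≤ 1 / 4 * A ^ q := by gcongr
    _ = A ^ q / 4 := by ring

end LargeNorm

theorem exists_pos_forall_rpow_le {q : ℝ} (hq : 1 < q) :
    ∃ c > 0, ∀ u A ρ s : ℝ, 0 ≤ u → 0 ≤ A → 0 < ρ → ρ - s ≤ u → A ≤ u + ρ → -s ≤ A →
      ρ ^ q / 2 + c * A ^ q - q * ρ ^ (q - 1) * s ≤ u ^ q := by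
  obtain ⟨ε, hε, hqε, hqεq⟩ := exists_pos_mul_le_and_mul_rpow_le hq
  have hεq : ε ^ q ≤ 1 / 2 := by
    calc ε ^ q ≤ ε ^ (1 : ℝ) := rpow_le_rpow_of_exponent_ge hε (by nlinarith) hq.le
      _ ≤ 1 / 2 := by rw [rpow_one]; nlinarith
  refine ⟨ε ^ q / 4, by positivity, fun u A ρ s hu hA hρ hρu hAu hsA ↦ ?_⟩
  have tangent := rpow_sub_mul_rpow_sub_one_mul_le_rpow hq.le hu hρ hρu
  rcases lt_or_ge (ε * A) ρ with hsmall | hlarge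
  · have : ε ^ q / 4 * A ^ q ≤ ρ ^ q / 2 := by
      have : (ε * A) ^ q ≤ ρ ^ q := by gcongr
      rw [mul_rpow hε.le hA] at this
      nlinarith [rpow_nonneg hρ.le q]
    linarith
  · have half := half_rpow_le_rpow_of_le_add hq.le hε.le hqε hA hlarge hAu
    have linear := neg_mul_rpow_sub_one_mul_le hq.le hε.le hqεq hρ hlarge hsA
    have : ε ^ q / 4 * A ^ q ≤ A ^ q / 8 := by nlinarith [rpow_nonneg hA q]
    -- average of `tangent` and `half`
    linarith

theorem stmt0 (p q : ℝ) (hp : 1 < p) (hq : 1 < q) :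
    ∃ c : ℝ, 0 < c ∧ ∀ (r : ℕ), 0 < r → ∀ x : Fin r → ℝ,
      (∑ i, |1 - x i| ^ p) ^ (q / p) ≥
        (r : ℝ) ^ (q / p) / 2 + c * (∑ i, |x i| ^ p) ^ (q / p)
          - q * (r : ℝ) ^ (q / p - 1) * ∑ i, x i := by
  obtain ⟨c, hc, key⟩ := exists_pos_forall_rpow_le hq
  refine ⟨c, hc, fun r hr x ↦ ?_⟩
  have hR : (0 : ℝ) < r := Nat.cast_pos.mpr hr
  have holder₁ := sum_le_card_rpow_mul_Lp univ hp.le (fun i ↦ 1 - x i)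
  have holder₂ := sum_le_card_rpow_mul_Lp univ hp.le (fun i ↦ -x i)
  have minkowski := Lp_add_le univ (fun i ↦ x i - 1) (fun _ ↦ 1) hp.le
  simp only [sum_sub_distrib, sum_neg_distrib, sum_const, card_univ, Fintype.card_fin,
    nsmul_eq_mul, mul_one, abs_neg, abs_one, one_rpow, sub_add_cancel, abs_sub_comm (x _)]
    at holder₁ holder₂ minkowski
  have hpow : ∀ t : ℝ, 0 ≤ t → t ^ (q / p) = (t ^ (1 / p)) ^ q := fun t ht ↦ by
    rw [← rpow_mul ht, one_div_mul_eq_div]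
  have hcoeff :
      (r : ℝ) ^ (q / p - 1) = ((r : ℝ) ^ (1 / p)) ^ (q - 1) / (r : ℝ) ^ (1 - 1 / p) := by
    rw [← rpow_mul hR.le, ← rpow_sub hR]; ring_nf
  rw [hpow (∑ i, |1 - x i| ^ p) (by positivity), hpow (∑ i, |x i| ^ p) (by positivity),
    hpow r hR.le, hcoeff]
  set ρ : ℝ := (r : ℝ) ^ (1 / p)
  set κ : ℝ := (r : ℝ) ^ (1 - 1 / p)
  have hκ : 0 < κ := rpow_pos_of_pos hR _
  have hρ : ρ = r / κ := by
    rw [eq_div_iff hκ.ne', ← rpow_add hR, add_sub_cancel, rpow_one]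
  have bound := key _ _ ρ ((∑ i, x i) / κ) (by positivity) (by positivity) (by positivity)
    (by rw [hρ, div_sub_div_same, div_le_iff₀ hκ]; linarith) minkowski
    (by rw [← neg_div, div_le_iff₀ hκ]; linarith)
  rw [ge_iff_le]
  convert bound using 2
  ring
end

section
/- Let $2\le p_1\le p_2<\infty$, $2\le q_1\le q_2<\infty$, with $\lambda(\mathbf p)=(\frac{1}{p_1}-\frac{1}{p_2})/(\frac12-\frac{1}{p_2})$ when $p_2>2$ (and $=1$ if $p_2=2$), and $\lambda(\mathbf p)\le\lambda(\mathbf q)$. Then for every matrix $x=(x_{ij})_{1\le i\le m,1\le j\le k}$ we have $\|x\|_{l^{m,k}_{p_1',q_1'}} \le \|x\|_{l^{m,k}_{2,2}}^{\lambda(\mathbf p)}\, \|x\|_{l^{m,k}_{p_2',q_2'}}^{1-\lambda(\mathbf p)}$. -/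
/-!
Hölder's inequality in the form `∑ fᵃ gᵇ ≤ (∑ f)ᵃ (∑ g)ᵇ` (`a + b = 1`), together with the
monotonicity of `ℓ^p` norms in `p`, gives `‖f^λ g^(1-λ)‖_r ≤ ‖f‖_p^λ ‖g‖_q^(1-λ)` whenever
`1/r ≤ λ/p + (1-λ)/q`. A mixed norm is the `ℓ^q` norm of the column `ℓ^p` norms, so applying this
first to every column and then to the column norms interpolates mixed norms. For the dual exponents
the column condition holds with equality by the choice of `λ(p)`; the row condition follows from
`λ(p) ≤ λ(q)`, since `1/2 - 1/q₂ ≥ 0` makes `λ/2 + (1-λ)/q₂'` decreasing in `λ`.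
-/

noncomputable def mixedNorm (m k : ℕ) (p q : ℝ) (x : Fin m → Fin k → ℝ) : ℝ :=
  (∑ j, (∑ i, |x i j| ^ p) ^ (q / p)) ^ (1 / q)

open Finset NNReal

theorem NNReal.rpow_sum_le_sum_rpow {ι : Type*} (s : Finset ι) (f : ι → ℝ≥0) {a : ℝ}
    (ha₀ : 0 < a) (ha₁ : a ≤ 1) :
    (∑ i ∈ s, f i) ^ a ≤ ∑ i ∈ s, f i ^ a := by
  induction s using Finset.cons_induction with
  | empty => simp [zero_rpow ha₀.ne']
  | cons i s hi ih =>
    rw [sum_cons, sum_cons]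
    exact (rpow_add_le_add_rpow _ _ ha₀.le ha₁).trans (by gcongr)

theorem NNReal.sum_rpow_mul_rpow_le {ι : Type*} (s : Finset ι) (f g : ι → ℝ≥0) {a b : ℝ}
    (ha : 0 ≤ a) (hb : 0 ≤ b) (hab : a + b = 1) :
    ∑ i ∈ s, f i ^ a * g i ^ b ≤ (∑ i ∈ s, f i) ^ a * (∑ i ∈ s, g i) ^ b := by
  rcases ha.eq_or_lt with rfl | ha
  · simp [show b = 1 by linarith]
  rcases hb.eq_or_lt with rfl | hb
  · simp [show a = 1 by linarith]
  have hab' : (1 / a).HolderConjugate (1 / b) :=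
    Real.holderConjugate_iff.mpr ⟨by rw [one_div, one_lt_inv₀ ha]; linarith, by simp [hab]⟩
  simpa [← rpow_mul, ha.ne', hb.ne'] using
    inner_le_Lp_mul_Lq s (fun i ↦ f i ^ a) (fun i ↦ g i ^ b) hab'

namespace Finset

variable {ι : Type*}

noncomputable def lpNorm (s : Finset ι) (p : ℝ) (f : ι → ℝ≥0) : ℝ≥0 :=
  (∑ i ∈ s, f i ^ p) ^ (1 / p)

theorem lpNorm_mono (s : Finset ι) {p : ℝ} (hp : 0 < p) {f g : ι → ℝ≥0}
    (hfg : ∀ i ∈ s, f i ≤ g i) : s.lpNorm p f ≤ s.lpNorm p g := by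
  unfold lpNorm
  gcongr with i hi
  exact hfg i hi

theorem lpNorm_le_lpNorm_of_exponent_le (s : Finset ι) (f : ι → ℝ≥0) {p r : ℝ}
    (hp : 0 < p) (hpr : p ≤ r) : s.lpNorm r f ≤ s.lpNorm p f := by
  have hr : 0 < r := hp.trans_le hpr
  have h := rpow_sum_le_sum_rpow s (fun i ↦ f i ^ r) (div_pos hp hr) ((div_le_one hr).2 hpr)
  simp only [← rpow_mul, mul_div_cancel₀ p hr.ne'] at h
  calc s.lpNorm r f = ((∑ i ∈ s, f i ^ r) ^ (p / r)) ^ (1 / p) := by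
        rw [lpNorm, ← rpow_mul]; congr 1; field_simp
    _ ≤ s.lpNorm p f := by unfold lpNorm; gcongr

theorem lpNorm_rpow_mul_rpow_le (s : Finset ι) (f g : ι → ℝ≥0) {L p q r : ℝ}
    (hL₀ : 0 ≤ L) (hL₁ : L ≤ 1) (hp : 0 < p) (hq : 0 < q) (hr : 0 < r)
    (hpqr : 1 / r ≤ L / p + (1 - L) / q) :
    s.lpNorm r (fun i ↦ f i ^ L * g i ^ (1 - L)) ≤ s.lpNorm p f ^ L * s.lpNorm q g ^ (1 - L) := by
  have hS : 0 < L / p + (1 - L) / q := (one_div_pos.2 hr).trans_le hpqr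
  set t := (L / p + (1 - L) / q)⁻¹ with ht_def
  have ht : 0 < t := inv_pos.2 hS
  have htr : t ≤ r := by
    rw [ht_def, inv_le_comm₀ hS hr, ← one_div]; exact hpqr
  refine (lpNorm_le_lpNorm_of_exponent_le s _ ht htr).trans ?_
  have hsum : L * t / p + (1 - L) * t / q = 1 := by
    calc _ = (L / p + (1 - L) / q) * t := by ring
      _ = 1 := mul_inv_cancel₀ hS.ne'
  have holder := sum_rpow_mul_rpow_le s (fun i ↦ f i ^ p) (fun i ↦ g i ^ q)
    (by positivity) (div_nonneg (mul_nonneg (sub_nonneg.2 hL₁) ht.le) hq.le) hsum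
  simp only [← rpow_mul, mul_div_cancel₀ _ hp.ne', mul_div_cancel₀ _ hq.ne'] at holder
  calc s.lpNorm t (fun i ↦ f i ^ L * g i ^ (1 - L))
      = (∑ i ∈ s, f i ^ (L * t) * g i ^ ((1 - L) * t)) ^ (1 / t) := by
        simp only [lpNorm, mul_rpow, ← rpow_mul]
    _ ≤ ((∑ i ∈ s, f i ^ p) ^ (L * t / p) * (∑ i ∈ s, g i ^ q) ^ ((1 - L) * t / q)) ^ (1 / t) := by
        gcongr
    _ = s.lpNorm p f ^ L * s.lpNorm q g ^ (1 - L) := by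
        simp only [lpNorm, mul_rpow, ← rpow_mul]
        congr 2 <;> field_simp

theorem lpNorm_le_rpow_mul_rpow (s : Finset ι) (f : ι → ℝ≥0) {L p q r : ℝ}
    (hL₀ : 0 ≤ L) (hL₁ : L ≤ 1) (hp : 0 < p) (hq : 0 < q) (hr : 0 < r)
    (hpqr : 1 / r ≤ L / p + (1 - L) / q) :
    s.lpNorm r f ≤ s.lpNorm p f ^ L * s.lpNorm q f ^ (1 - L) := by
  have hf : (fun i ↦ f i ^ L * f i ^ (1 - L)) = f := by
    ext1 i
    rw [← rpow_add' (by simp), add_sub_cancel, rpow_one]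
  simpa only [hf] using lpNorm_rpow_mul_rpow_le s f f hL₀ hL₁ hp hq hr hpqr

end Finset

theorem mixedNorm_eq_lpNorm_lpNorm (m k : ℕ) (p q : ℝ) (x : Fin m → Fin k → ℝ) :
    mixedNorm m k p q x = univ.lpNorm q (fun j ↦ univ.lpNorm p (fun i ↦ ‖x i j‖₊)) := by
  simp [mixedNorm, lpNorm, ← rpow_mul, inv_mul_eq_div]

theorem mixedNorm_le_rpow_mul_rpow {m k : ℕ} (x : Fin m → Fin k → ℝ) {L a a₀ a₁ b b₀ b₁ : ℝ}
    (hL₀ : 0 ≤ L) (hL₁ : L ≤ 1) (ha : 0 < a) (ha₀ : 0 < a₀) (ha₁ : 0 < a₁)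
    (hb : 0 < b) (hb₀ : 0 < b₀) (hb₁ : 0 < b₁)
    (haL : 1 / a ≤ L / a₀ + (1 - L) / a₁) (hbL : 1 / b ≤ L / b₀ + (1 - L) / b₁) :
    mixedNorm m k a b x ≤ mixedNorm m k a₀ b₀ x ^ L * mixedNorm m k a₁ b₁ x ^ (1 - L) := by
  simp only [mixedNorm_eq_lpNorm_lpNorm, ← NNReal.coe_rpow, ← NNReal.coe_mul, NNReal.coe_le_coe]
  have columnwise := fun j ↦
    lpNorm_le_rpow_mul_rpow univ (fun i ↦ ‖x i j‖₊) hL₀ hL₁ ha₀ ha₁ ha haL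
  exact (lpNorm_mono univ hb fun j _ ↦ columnwise j).trans
    (lpNorm_rpow_mul_rpow_le univ _ _ hL₀ hL₁ hb₀ hb₁ hb hbL)

/-- The exponent `λ(p)` for `p = (p₁, p₂)`. -/
noncomputable def interpolationParameter (p₁ p₂ : ℝ) : ℝ :=
  if p₂ = 2 then 1 else (1/p₁ - 1/p₂) / (1/2 - 1/p₂)

section interpolationParameter

variable {p₁ p₂ : ℝ}

theorem interpolationParameter_mul (hp₁ : 2 ≤ p₁) (hp : p₁ ≤ p₂) :
    interpolationParameter p₁ p₂ * (1/2 - 1/p₂) = 1/p₁ - 1/p₂ := by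
  unfold interpolationParameter
  split_ifs with h
  · obtain rfl : p₁ = 2 := le_antisymm (h ▸ hp) hp₁
    simp [h]
  · refine div_mul_cancel₀ _ (sub_ne_zero.2 ?_)
    simpa [eq_comm] using h

theorem interpolationParameter_nonneg (hp₁ : 2 ≤ p₁) (hp : p₁ ≤ p₂) :
    0 ≤ interpolationParameter p₁ p₂ := by
  unfold interpolationParameter
  split_ifs
  · exact zero_le_one
  · apply div_nonneg <;> rw [sub_nonneg] <;> gcongr; linarith

theorem interpolationParameter_le_one (hp₁ : 2 ≤ p₁) (hp : p₁ ≤ p₂) :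
    interpolationParameter p₁ p₂ ≤ 1 := by
  unfold interpolationParameter
  split_ifs
  · exact le_rfl
  · exact div_le_one_of_le₀ (by gcongr) (by rw [sub_nonneg]; gcongr; linarith)

end interpolationParameter

theorem one_div_conjExponent_le {L p₁ p₂ : ℝ} (hp₁ : p₁ ≠ 0) (hp₂ : p₂ ≠ 0)
    (h : L * (1/2 - 1/p₂) ≤ 1/p₁ - 1/p₂) :
    1 / (p₁ / (p₁ - 1)) ≤ L / 2 + (1 - L) / (p₂ / (p₂ - 1)) := by
  have hconj : ∀ p : ℝ, p ≠ 0 → 1 / (p / (p - 1)) = 1 - 1 / p := fun p hp ↦ by field_simp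
  rw [div_eq_mul_one_div (1 - L), hconj p₁ hp₁, hconj p₂ hp₂]
  linarith

theorem stmt2 (m k : ℕ) (p₁ p₂ q₁ q₂ : ℝ)
    (hp1 : 2 ≤ p₁) (hp : p₁ ≤ p₂) (hq1 : 2 ≤ q₁) (hq : q₁ ≤ q₂)
    (lamP lamQ : ℝ)
    (hlamP : lamP = if p₂ = 2 then 1 else (1/p₁ - 1/p₂) / (1/2 - 1/p₂))
    (hlamQ : lamQ = if q₂ = 2 then 1 else (1/q₁ - 1/q₂) / (1/2 - 1/q₂))
    (hle : lamP ≤ lamQ)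
    (x : Fin m → Fin k → ℝ) :
    mixedNorm m k (p₁/(p₁-1)) (q₁/(q₁-1)) x ≤
      mixedNorm m k 2 2 x ^ lamP *
        mixedNorm m k (p₂/(p₂-1)) (q₂/(q₂-1)) x ^ (1 - lamP) := by
  obtain rfl : lamP = interpolationParameter p₁ p₂ := hlamP
  obtain rfl : lamQ = interpolationParameter q₁ q₂ := hlamQ
  have hp2 : 2 ≤ p₂ := hp1.trans hp
  have hq2 : 2 ≤ q₂ := hq1.trans hq
  have conj_pos : ∀ p : ℝ, 2 ≤ p → 0 < p / (p - 1) := fun p hp ↦ div_pos (by linarith) (by linarith)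
  have hP := interpolationParameter_mul hp1 hp
  have hQ : interpolationParameter p₁ p₂ * (1/2 - 1/q₂) ≤ 1/q₁ - 1/q₂ :=
    calc _ ≤ interpolationParameter q₁ q₂ * (1/2 - 1/q₂) :=
          mul_le_mul_of_nonneg_right hle (by rw [sub_nonneg]; gcongr)
      _ = 1/q₁ - 1/q₂ := interpolationParameter_mul hq1 hq
  exact mixedNorm_le_rpow_mul_rpow x (interpolationParameter_nonneg hp1 hp)
    (interpolationParameter_le_one hp1 hp) (conj_pos p₁ hp1) two_pos (conj_pos p₂ hp2)
    (conj_pos q₁ hq1) two_pos (conj_pos q₂ hq2)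
    (one_div_conjExponent_le (by positivity) (by positivity) hP.le)
    (one_div_conjExponent_le (by positivity) (by positivity) hQ)
end

section
/- Let $2\le p_1\le p_2<\infty$, $2\le q_1\le q_2<\infty$, with $\lambda(\mathbf q)=(\frac{1}{q_1}-\frac{1}{q_2})/(\frac12-\frac{1}{q_2})$ when $q_2>2$ (and $=1$ if $q_2=2$), and $\lambda(\mathbf p)\ge\lambda(\mathbf q)$. Then for every matrix $x=(x_{ij})_{1\le i\le m,1\le j\le k}$ we have $\|x\|_{l^{m,k}_{p_1',q_1'}} \le \|x\|_{l^{m,k}_{2,2}}^{\lambda(\mathbf q)}\, \|x\|_{l^{m,k}_{p_2',q_2'}}^{1-\lambda(\mathbf q)}$. -/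
open Finset Real

section FinsetLpNorm

variable {ι : Type*} (s : Finset ι)

theorem sum_rpow_mul_rpow_le_of_nonneg {f g : ι → ℝ} (hf : ∀ i ∈ s, 0 ≤ f i)
    (hg : ∀ i ∈ s, 0 ≤ g i) {θ : ℝ} (hθ₀ : 0 ≤ θ) (hθ₁ : θ ≤ 1) :
    ∑ i ∈ s, f i ^ θ * g i ^ (1 - θ) ≤ (∑ i ∈ s, f i) ^ θ * (∑ i ∈ s, g i) ^ (1 - θ) := by
  rcases hθ₀.eq_or_lt with rfl | hθ₀
  · simp
  rcases hθ₁.eq_or_lt with rfl | hθ₁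
  · simp
  have hconj : HolderConjugate (1 / θ) (1 / (1 - θ)) :=
    holderConjugate_one_div hθ₀ (by linarith) (by ring)
  have := inner_le_Lp_mul_Lq_of_nonneg s hconj (fun i hi => rpow_nonneg (hf i hi) θ)
    (fun i hi => rpow_nonneg (hg i hi) (1 - θ))
  simp only [one_div, inv_inv] at this
  rwa [sum_congr rfl fun i hi => rpow_rpow_inv (hf i hi) hθ₀.ne',
    sum_congr rfl fun i hi => rpow_rpow_inv (hg i hi) (sub_pos.2 hθ₁).ne'] at this

theorem sum_rpow_le_rpow_sum_of_nonneg {f : ι → ℝ} (hf : ∀ i ∈ s, 0 ≤ f i) {t : ℝ}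
    (ht : 1 ≤ t) : ∑ i ∈ s, f i ^ t ≤ (∑ i ∈ s, f i) ^ t := by
  have hsplit : ∀ {x : ℝ}, 0 ≤ x → x ^ t = x ^ (t - 1) * x := fun hx => by
    rw [← rpow_add_one' hx (by linarith), sub_add_cancel]
  calc ∑ i ∈ s, f i ^ t ≤ ∑ i ∈ s, (∑ j ∈ s, f j) ^ (t - 1) * f i := by
        refine sum_le_sum fun i hi => ?_
        rw [hsplit (hf i hi)]
        gcongr
        · exact hf i hi
        · exact hf i hi
        · exact single_le_sum hf hi
    _ = (∑ i ∈ s, f i) ^ t := by rw [← mul_sum, ← hsplit (sum_nonneg hf)]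

noncomputable def finsetLpNorm (p : ℝ) (f : ι → ℝ) : ℝ :=
  (∑ i ∈ s, f i ^ p) ^ (1 / p)

variable {s}

theorem finsetLpNorm_nonneg {f : ι → ℝ} (hf : ∀ i ∈ s, 0 ≤ f i) (p : ℝ) :
    0 ≤ finsetLpNorm s p f :=
  rpow_nonneg (sum_nonneg fun i hi => rpow_nonneg (hf i hi) p) _

theorem finsetLpNorm_rpow {f : ι → ℝ} (hf : ∀ i ∈ s, 0 ≤ f i) (p t : ℝ) :
    finsetLpNorm s p f ^ t = (∑ i ∈ s, f i ^ p) ^ (t / p) := by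
  rw [finsetLpNorm, ← rpow_mul (sum_nonneg fun i hi => rpow_nonneg (hf i hi) p),
    one_div_mul_eq_div]

theorem finsetLpNorm_mono {f g : ι → ℝ} (hf : ∀ i ∈ s, 0 ≤ f i) (hfg : ∀ i ∈ s, f i ≤ g i)
    {p : ℝ} (hp : 0 < p) : finsetLpNorm s p f ≤ finsetLpNorm s p g := by
  unfold finsetLpNorm
  gcongr with i hi
  · exact sum_nonneg fun i hi => rpow_nonneg (hf i hi) p
  · exact hf i hi
  · exact hfg i hi

theorem finsetLpNorm_anti_exponent {f : ι → ℝ} (hf : ∀ i ∈ s, 0 ≤ f i) {a b : ℝ}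
    (ha : 0 < a) (hab : a ≤ b) : finsetLpNorm s b f ≤ finsetLpNorm s a f := by
  have hb : 0 < b := ha.trans_le hab
  have hfa : ∀ i ∈ s, 0 ≤ f i ^ a := fun i hi => rpow_nonneg (hf i hi) a
  have hpow : ∑ i ∈ s, f i ^ b = ∑ i ∈ s, (f i ^ a) ^ (b / a) :=
    sum_congr rfl fun i hi => by rw [← rpow_mul (hf i hi), mul_div_cancel₀ _ ha.ne']
  calc finsetLpNorm s b f ≤ ((∑ i ∈ s, f i ^ a) ^ (b / a)) ^ (1 / b) := by
        rw [finsetLpNorm, hpow]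
        gcongr
        · exact sum_nonneg fun i hi => rpow_nonneg (hfa i hi) _
        · exact sum_rpow_le_rpow_sum_of_nonneg s hfa ((one_le_div ha).2 hab)
    _ = finsetLpNorm s a f := by
        rw [← rpow_mul (sum_nonneg hfa), finsetLpNorm]
        congr 1
        field_simp

theorem finsetLpNorm_rpow_mul_rpow_le_of_eq {A B : ι → ℝ} (hA : ∀ i ∈ s, 0 ≤ A i)
    (hB : ∀ i ∈ s, 0 ≤ B i) {θ a b c : ℝ} (hθ₀ : 0 ≤ θ) (hθ₁ : θ ≤ 1) (ha : 0 < a)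
    (hb : 0 < b) (hc : 0 < c) (habc : 1 / c = θ / a + (1 - θ) / b) :
    finsetLpNorm s c (fun i => A i ^ θ * B i ^ (1 - θ)) ≤
      finsetLpNorm s a A ^ θ * finsetLpNorm s b B ^ (1 - θ) := by
  have ht : 1 - c * θ / a = c * (1 - θ) / b := by
    have hc₁ : c * (1 / c) = 1 := mul_one_div_cancel hc.ne'
    rw [habc] at hc₁
    linear_combination -hc₁
  have ht₁ : c * θ / a ≤ 1 := by
    have : 0 ≤ c * (1 - θ) / b := div_nonneg (mul_nonneg hc.le (sub_nonneg.2 hθ₁)) hb.le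
    linarith
  have hAa : ∀ i ∈ s, 0 ≤ A i ^ a := fun i hi => rpow_nonneg (hA i hi) a
  have hBb : ∀ i ∈ s, 0 ≤ B i ^ b := fun i hi => rpow_nonneg (hB i hi) b
  have hterm : ∀ i ∈ s, (A i ^ θ * B i ^ (1 - θ)) ^ c =
      (A i ^ a) ^ (c * θ / a) * (B i ^ b) ^ (1 - c * θ / a) := fun i hi => by
    rw [mul_rpow (rpow_nonneg (hA i hi) _) (rpow_nonneg (hB i hi) _), ht,
      ← rpow_mul (hA i hi), ← rpow_mul (hA i hi), ← rpow_mul (hB i hi),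
      ← rpow_mul (hB i hi)]
    congr 2 <;> field_simp
  calc finsetLpNorm s c (fun i => A i ^ θ * B i ^ (1 - θ))
      = (∑ i ∈ s, (A i ^ a) ^ (c * θ / a) * (B i ^ b) ^ (1 - c * θ / a)) ^ (1 / c) := by
        rw [finsetLpNorm, sum_congr rfl hterm]
    _ ≤ ((∑ i ∈ s, A i ^ a) ^ (c * θ / a) * (∑ i ∈ s, B i ^ b) ^ (1 - c * θ / a)) ^
          (1 / c) := by
        gcongr
        · exact sum_nonneg fun i hi =>
            mul_nonneg (rpow_nonneg (hAa i hi) _) (rpow_nonneg (hBb i hi) _)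
        · exact sum_rpow_mul_rpow_le_of_nonneg s hAa hBb (by positivity) ht₁
    _ = finsetLpNorm s a A ^ θ * finsetLpNorm s b B ^ (1 - θ) := by
        rw [finsetLpNorm_rpow hA, finsetLpNorm_rpow hB,
          mul_rpow (rpow_nonneg (sum_nonneg hAa) _) (rpow_nonneg (sum_nonneg hBb) _),
          ← rpow_mul (sum_nonneg hAa), ← rpow_mul (sum_nonneg hBb), ht]
        congr 2 <;> field_simp

theorem finsetLpNorm_rpow_mul_rpow_le {A B : ι → ℝ} (hA : ∀ i ∈ s, 0 ≤ A i)
    (hB : ∀ i ∈ s, 0 ≤ B i) {θ a b c : ℝ} (hθ₀ : 0 ≤ θ) (hθ₁ : θ ≤ 1) (ha : 0 < a)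
    (hb : 0 < b) (hc : 0 < c) (habc : 1 / c ≤ θ / a + (1 - θ) / b) :
    finsetLpNorm s c (fun i => A i ^ θ * B i ^ (1 - θ)) ≤
      finsetLpNorm s a A ^ θ * finsetLpNorm s b B ^ (1 - θ) := by
  have hr : 0 < θ / a + (1 - θ) / b := (one_div_pos.2 hc).trans_le habc
  calc finsetLpNorm s c (fun i => A i ^ θ * B i ^ (1 - θ))
      ≤ finsetLpNorm s (1 / (θ / a + (1 - θ) / b)) (fun i => A i ^ θ * B i ^ (1 - θ)) :=
        finsetLpNorm_anti_exponent
          (fun i hi => mul_nonneg (rpow_nonneg (hA i hi) θ) (rpow_nonneg (hB i hi) _))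
          (one_div_pos.2 hr) (by rwa [one_div_le hr hc])
    _ ≤ _ := finsetLpNorm_rpow_mul_rpow_le_of_eq hA hB hθ₀ hθ₁ ha hb (one_div_pos.2 hr)
        (one_div_one_div _)

theorem finsetLpNorm_le_rpow_mul_rpow {f : ι → ℝ} (hf : ∀ i ∈ s, 0 ≤ f i) {θ a b c : ℝ}
    (hθ₀ : 0 ≤ θ) (hθ₁ : θ ≤ 1) (ha : 0 < a) (hb : 0 < b) (hc : 0 < c)
    (habc : 1 / c ≤ θ / a + (1 - θ) / b) :
    finsetLpNorm s c f ≤ finsetLpNorm s a f ^ θ * finsetLpNorm s b f ^ (1 - θ) := by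
  have hsplit : ∀ i ∈ s, f i ^ θ * f i ^ (1 - θ) = f i := fun i hi => by
    rw [← rpow_add' (hf i hi) (by norm_num), add_sub_cancel, rpow_one]
  calc finsetLpNorm s c f = finsetLpNorm s c (fun i => f i ^ θ * f i ^ (1 - θ)) := by
        unfold finsetLpNorm
        congr 1
        exact sum_congr rfl fun i hi => by simp only [hsplit i hi]
    _ ≤ _ := finsetLpNorm_rpow_mul_rpow_le hf hf hθ₀ hθ₁ ha hb hc habc

end FinsetLpNorm

theorem mixedNorm_eq_finsetLpNorm (m k : ℕ) (p q : ℝ) (x : Fin m → Fin k → ℝ) :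
    mixedNorm m k p q x =
      finsetLpNorm univ q (fun j => finsetLpNorm univ p (fun i => |x i j|)) := by
  rw [mixedNorm, finsetLpNorm]
  congr 1
  exact sum_congr rfl fun j _ => (finsetLpNorm_rpow (fun i _ => abs_nonneg (x i j)) p q).symm

section InterpolationParam

/-- The `θ` with `1 / r₁ = θ / 2 + (1 - θ) / r₂`, written `λ(r)` in the paper. -/
noncomputable def interpolationParam (r₁ r₂ : ℝ) : ℝ :=
  if r₂ = 2 then 1 else (1 / r₁ - 1 / r₂) / (1 / 2 - 1 / r₂)

variable {r₁ r₂ : ℝ}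

theorem interpolationParam_mem_Icc (hr₁ : 2 ≤ r₁) (hr : r₁ ≤ r₂) :
    interpolationParam r₁ r₂ ∈ Set.Icc 0 1 := by
  unfold interpolationParam
  split_ifs with hr₂
  · simp
  have h₂ : 1 / r₂ < 1 / 2 := one_div_lt_one_div_of_lt two_pos (hr₁.trans hr |>.lt_of_ne' hr₂)
  have h₁₂ : 1 / r₂ ≤ 1 / r₁ := one_div_le_one_div_of_le (by linarith) hr
  have h₁ : 1 / r₁ ≤ 1 / 2 := one_div_le_one_div_of_le two_pos hr₁
  exact ⟨div_nonneg (by linarith) (by linarith), (div_le_one (by linarith)).2 (by linarith)⟩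

theorem one_div_eq_interpolationParam (hr₁ : 2 ≤ r₁) (hr : r₁ ≤ r₂) :
    1 / r₁ = interpolationParam r₁ r₂ / 2 + (1 - interpolationParam r₁ r₂) / r₂ := by
  unfold interpolationParam
  split_ifs with hr₂
  · rw [le_antisymm (hr₂ ▸ hr) hr₁, hr₂]
    norm_num
  have h₂ : 1 / r₂ < 1 / 2 := one_div_lt_one_div_of_lt two_pos (hr₁.trans hr |>.lt_of_ne' hr₂)
  have hcancel := div_mul_cancel₀ (1 / r₁ - 1 / r₂) (sub_pos.2 h₂).ne'
  linear_combination -hcancel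

theorem add_div_le_one_div_of_le_interpolationParam (hr₁ : 2 ≤ r₁) (hr : r₁ ≤ r₂) {θ : ℝ}
    (hθ : θ ≤ interpolationParam r₁ r₂) : θ / 2 + (1 - θ) / r₂ ≤ 1 / r₁ := by
  calc θ / 2 + (1 - θ) / r₂ = 1 / r₂ + θ * (1 / 2 - 1 / r₂) := by ring
    _ ≤ 1 / r₂ + interpolationParam r₁ r₂ * (1 / 2 - 1 / r₂) := by
        gcongr
        exact sub_nonneg.2 (one_div_le_one_div_of_le two_pos (hr₁.trans hr))
    _ = 1 / r₁ := by rw [one_div_eq_interpolationParam hr₁ hr]; ring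

end InterpolationParam

theorem one_div_conjExponent_le_s3 {θ r₁ r₂ : ℝ} (hr₁ : 1 < r₁) (hr₂ : 1 < r₂)
    (h : θ / 2 + (1 - θ) / r₂ ≤ 1 / r₁) :
    1 / conjExponent r₁ ≤ θ / 2 + (1 - θ) / conjExponent r₂ := by
  have e₁ := (HolderConjugate.conjExponent hr₁).inv_add_inv_eq_inv
  have e₂ := (HolderConjugate.conjExponent hr₂).inv_add_inv_eq_inv
  simp only [div_eq_mul_inv] at h ⊢
  linear_combination h + e₁ - (1 - θ) * e₂

theorem stmt3 (m k : ℕ) (p₁ p₂ q₁ q₂ : ℝ)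
    (hp1 : 2 ≤ p₁) (hp : p₁ ≤ p₂) (hq1 : 2 ≤ q₁) (hq : q₁ ≤ q₂)
    (lamP lamQ : ℝ)
    (hlamP : lamP = if p₂ = 2 then 1 else (1/p₁ - 1/p₂) / (1/2 - 1/p₂))
    (hlamQ : lamQ = if q₂ = 2 then 1 else (1/q₁ - 1/q₂) / (1/2 - 1/q₂))
    (hle : lamQ ≤ lamP)
    (x : Fin m → Fin k → ℝ) :
    mixedNorm m k (p₁/(p₁-1)) (q₁/(q₁-1)) x ≤
      mixedNorm m k 2 2 x ^ lamQ *
        mixedNorm m k (p₂/(p₂-1)) (q₂/(q₂-1)) x ^ (1 - lamQ) := by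
  have conj_pos : ∀ {r : ℝ}, 2 ≤ r → 0 < conjExponent r := fun hr =>
    (HolderConjugate.conjExponent (by linarith)).symm.pos
  obtain ⟨hθ₀, hθ₁⟩ : lamQ ∈ Set.Icc 0 1 := by
    rw [hlamQ]
    exact interpolationParam_mem_Icc hq1 hq
  have hP : 1 / conjExponent p₁ ≤ lamQ / 2 + (1 - lamQ) / conjExponent p₂ :=
    one_div_conjExponent_le_s3 (by linarith) (by linarith)
      (add_div_le_one_div_of_le_interpolationParam hp1 hp (hle.trans_eq hlamP))
  have hQ : 1 / conjExponent q₁ ≤ lamQ / 2 + (1 - lamQ) / conjExponent q₂ :=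
    one_div_conjExponent_le_s3 (by linarith) (by linarith)
      (add_div_le_one_div_of_le_interpolationParam hq1 hq hlamQ.le)
  have col_nonneg : ∀ j, ∀ i ∈ univ, 0 ≤ |x i j| := fun _ _ _ => abs_nonneg _
  simp only [mixedNorm_eq_finsetLpNorm]
  calc _ ≤ finsetLpNorm univ (conjExponent q₁) (fun j =>
          finsetLpNorm univ 2 (fun i => |x i j|) ^ lamQ *
            finsetLpNorm univ (conjExponent p₂) (fun i => |x i j|) ^ (1 - lamQ)) :=
        finsetLpNorm_mono (fun j _ => finsetLpNorm_nonneg (col_nonneg j) _)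
          (fun j _ => finsetLpNorm_le_rpow_mul_rpow (col_nonneg j) hθ₀ hθ₁ two_pos
            (conj_pos (hp1.trans hp)) (conj_pos hp1) hP)
          (conj_pos hq1)
    _ ≤ _ :=
        finsetLpNorm_rpow_mul_rpow_le (fun j _ => finsetLpNorm_nonneg (col_nonneg j) _)
          (fun j _ => finsetLpNorm_nonneg (col_nonneg j) _) hθ₀ hθ₁ two_pos
          (conj_pos (hq1.trans hq)) (conj_pos hq1) hQ
end

section
/- Let $2\le q<\infty$, $k\in\mathbb{N}$, and let $\mu = \lfloor (k^{1/(2q)})^{1/(1/2-1/(2q))} \rfloor = \lfloor k^{1/(q-1)} \rfloor$. Then there is a constant $C(q)$ (independent of $k$) such that for any nonincreasing sequence $a_1^*\ge a_2^*\ge\cdots\ge a_k^*\ge 0$: $\left(\sum_{j=1}^k (a_j^*)^q\right)^{1/q} \le \left(\sum_{j\le \mu}(a_j^*)^2\right)^{1/2} + C(q)\max_{\mu<j\le k} k^{1/(2q)}\, j^{1/(2q)}\, a_j^*$. -/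
/-!
Cut the sum at `μ`. The head `∑_{j ≤ μ} (a_j)^q` is bounded by the `q/2`-th power of the
corresponding sum of squares, since the `ℓ^q` norm is dominated by the `ℓ^2` norm for `q ≥ 2`.
On the tail, writing `M` for the maximum of `k^{1/(2q)} j^{1/(2q)} a_j`, each term satisfies
`(a_j)^q ≤ M^q / √(k j)`, and `∑_{j ≤ k} 1/√j ≤ 2√k` bounds the tail by `2 M^q`. Subadditivity
of `t ↦ t^{1/q}` then gives the claim with `C = 2`; the particular value of `μ` plays no role.
-/

open Finset

lemma sum_inv_sqrt_le_two_mul_sqrt (n : ℕ) :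
    ∑ j ∈ Icc 1 n, (√(j : ℝ))⁻¹ ≤ 2 * √(n : ℝ) := by
  induction n with
  | zero => simp
  | succ n ih =>
    rw [sum_Icc_succ_top (by omega)]
    have hn : √(n : ℝ) ≤ √((n + 1 : ℕ) : ℝ) := Real.sqrt_le_sqrt (by simp)
    have hn1 : 0 < √((n + 1 : ℕ) : ℝ) := Real.sqrt_pos.2 (by positivity)
    -- `1/√(n+1) ≤ 2/(√(n+1) + √n) = 2(√(n+1) - √n)`
    have hstep : (√((n + 1 : ℕ) : ℝ))⁻¹ ≤ 2 * (√((n + 1 : ℕ) : ℝ) - √(n : ℝ)) := by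
      have hsq : √((n + 1 : ℕ) : ℝ) ^ 2 - √(n : ℝ) ^ 2 = 1 := by
        rw [Real.sq_sqrt (by positivity), Real.sq_sqrt (by positivity)]; push_cast; ring
      rw [inv_le_iff_one_le_mul₀ hn1]
      nlinarith [Real.sqrt_nonneg (n : ℝ)]
    linarith

lemma sum_rpow_rpow_inv_le_of_le {ι : Type*} (s : Finset ι) {f : ι → ℝ} (hf : ∀ i ∈ s, 0 ≤ f i)
    {p q : ℝ} (hp : 0 < p) (hpq : p ≤ q) :
    (∑ i ∈ s, f i ^ q) ^ (1 / q) ≤ (∑ i ∈ s, f i ^ p) ^ (1 / p) := by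
  set T := ∑ i ∈ s, f i ^ p
  have hT : 0 ≤ T := sum_nonneg fun i hi => Real.rpow_nonneg (hf i hi) _
  have hq : 0 < q := hp.trans_le hpq
  have hterm : ∀ i ∈ s, f i ^ q ≤ f i ^ p * T ^ (q / p - 1) := by
    intro i hi
    have hfi := hf i hi
    have hsplit : f i ^ q = f i ^ p * (f i ^ p) ^ (q / p - 1) := by
      rw [← Real.rpow_mul hfi, ← Real.rpow_add' hfi (by field_simp; linarith)]
      congr 1; field_simp; ring
    rw [hsplit]
    gcongr
    · exact sub_nonneg.2 ((one_le_div hp).2 hpq)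
    · exact single_le_sum (fun j hj => Real.rpow_nonneg (hf j hj) _) hi
  have hsum : ∑ i ∈ s, f i ^ q ≤ T ^ (q / p) :=
    calc ∑ i ∈ s, f i ^ q ≤ ∑ i ∈ s, f i ^ p * T ^ (q / p - 1) := sum_le_sum hterm
      _ = T ^ (q / p) := by
        rw [← sum_mul, ← Real.rpow_one_add' hT (by rw [add_sub_cancel]; positivity),
          add_sub_cancel]
  calc (∑ i ∈ s, f i ^ q) ^ (1 / q) ≤ (T ^ (q / p)) ^ (1 / q) :=
        Real.rpow_le_rpow (sum_nonneg fun i hi => Real.rpow_nonneg (hf i hi) _) hsum (by positivity)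
    _ = T ^ (1 / p) := by rw [← Real.rpow_mul hT]; congr 1; field_simp

lemma rpow_le_div_sqrt_of_rpow_mul_le {q x a M : ℝ} (hq : 0 < q) (hx : 0 < x) (ha : 0 ≤ a)
    (hM : x ^ (1 / (2 * q)) * a ≤ M) : a ^ q ≤ M ^ q / √x := by
  rw [le_div_iff₀ (Real.sqrt_pos.2 hx)]
  calc a ^ q * √x = (x ^ (1 / (2 * q)) * a) ^ q := by
        rw [Real.mul_rpow (by positivity) ha, ← Real.rpow_mul hx.le, Real.sqrt_eq_rpow]
        field_simp
    _ ≤ M ^ q := Real.rpow_le_rpow (by positivity) hM hq.le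

lemma sum_rpow_rpow_inv_le_two_mul {q M : ℝ} (hq : 1 ≤ q) (hM : 0 ≤ M) {k : ℕ} (hk : 0 < k)
    {s : Finset ℕ} (hs : s ⊆ Icc 1 k) {a : ℕ → ℝ} (ha : ∀ j ∈ s, 0 ≤ a j)
    (haM : ∀ j ∈ s, (k : ℝ) ^ (1 / (2 * q)) * (j : ℝ) ^ (1 / (2 * q)) * a j ≤ M) :
    (∑ j ∈ s, a j ^ q) ^ (1 / q) ≤ 2 * M := by
  have hq0 : 0 < q := one_pos.trans_le hq
  have hk' : (0 : ℝ) < √(k : ℝ) := Real.sqrt_pos.2 (Nat.cast_pos.2 hk)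
  have hterm : ∀ j ∈ s, a j ^ q ≤ M ^ q / √(k : ℝ) * (√(j : ℝ))⁻¹ := by
    intro j hj
    have hj1 : (0 : ℝ) < j := by exact_mod_cast (mem_Icc.1 (hs hj)).1
    have h := rpow_le_div_sqrt_of_rpow_mul_le (M := M) hq0 (mul_pos (Nat.cast_pos.2 hk) hj1)
      (ha j hj) (by rw [Real.mul_rpow (by positivity) hj1.le]; exact haM j hj)
    rwa [Real.sqrt_mul (by positivity), div_mul_eq_div_div, div_eq_mul_inv] at h
  have hsum : ∑ j ∈ s, a j ^ q ≤ 2 * M ^ q :=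
    calc ∑ j ∈ s, a j ^ q ≤ ∑ j ∈ Icc 1 k, M ^ q / √(k : ℝ) * (√(j : ℝ))⁻¹ :=
          (sum_le_sum hterm).trans (sum_le_sum_of_subset_of_nonneg hs fun _ _ _ => by positivity)
      _ ≤ M ^ q / √(k : ℝ) * (2 * √(k : ℝ)) := by
          rw [← mul_sum]; gcongr; exact sum_inv_sqrt_le_two_mul_sqrt k
      _ = 2 * M ^ q := by field_simp
  calc (∑ j ∈ s, a j ^ q) ^ (1 / q) ≤ (2 * M ^ q) ^ (1 / q) :=
        Real.rpow_le_rpow (sum_nonneg fun j hj => Real.rpow_nonneg (ha j hj) _) hsum (by positivity)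
    _ = 2 ^ (1 / q) * M := by
        rw [Real.mul_rpow zero_le_two (by positivity), one_div, Real.rpow_rpow_inv hM hq0.ne']
    _ ≤ 2 * M := by
        gcongr
        exact Real.rpow_le_self_of_one_le one_le_two ((div_le_one hq0).2 hq)

lemma Finset.le_ciSup_of_mem {α ι : Type*} [ConditionallyCompleteLattice α] (f : ι → α)
    {s : Finset ι} {j : ι} (hj : j ∈ s) : f j ≤ ⨆ i ∈ s, f i :=
  le_ciSup₂ (f := fun i (_ : i ∈ s) => f i)
    ((s.finite_toSet.image f).bddAbove.mono
      (Set.iUnion_subset fun _ => Set.range_subset_iff.2 fun hi => Set.mem_image_of_mem f hi)) j hj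

theorem stmt10 (q : ℝ) (hq : 2 ≤ q) :
    ∃ C : ℝ, 0 < C ∧ ∀ k : ℕ, 0 < k → ∀ a : ℕ → ℝ,
      (∀ j, 1 ≤ j → j ≤ k → 0 ≤ a j) →
      (∀ i j, 1 ≤ i → i ≤ j → j ≤ k → a j ≤ a i) →
      (∑ j ∈ Finset.Icc 1 k, a j ^ q) ^ (1/q) ≤
        (∑ j ∈ Finset.Icc 1 (⌊(k:ℝ) ^ (1/(q-1))⌋₊), a j ^ (2:ℝ)) ^ ((1:ℝ)/2) +
        C * ⨆ j ∈ Finset.Ioc (⌊(k:ℝ) ^ (1/(q-1))⌋₊) k,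
              (k:ℝ) ^ (1/(2*q)) * (j:ℝ) ^ (1/(2*q)) * a j := by
  refine ⟨2, two_pos, fun k hk a ha _ => ?_⟩
  set μ := ⌊(k:ℝ) ^ (1/(q-1))⌋₊
  set M := ⨆ j ∈ Ioc μ k, (k:ℝ) ^ (1/(2*q)) * (j:ℝ) ^ (1/(2*q)) * a j
  have ha' : ∀ j ∈ Icc 1 k, 0 ≤ a j := fun j hj => ha j (mem_Icc.1 hj).1 (mem_Icc.1 hj).2
  have hM : 0 ≤ M := Real.iSup_nonneg fun j => Real.iSup_nonneg fun hj => by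
    have := ha j (by simp at hj; omega) (mem_Ioc.1 hj).2
    positivity
  have hhead : (∑ j ∈ Icc 1 k ∩ Icc 1 μ, a j ^ q) ^ (1/q)
      ≤ (∑ j ∈ Icc 1 μ, a j ^ (2:ℝ)) ^ ((1:ℝ)/2) :=
    (sum_rpow_rpow_inv_le_of_le _ (fun j hj => ha' j (mem_inter.1 hj).1) two_pos hq).trans
      (Real.rpow_le_rpow (sum_nonneg fun j _ => by rw [Real.rpow_two]; positivity)
        (sum_le_sum_of_subset_of_nonneg inter_subset_right fun _ _ _ => by
          rw [Real.rpow_two]; positivity)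
        (by norm_num))
  have htail : (∑ j ∈ Icc 1 k \ Icc 1 μ, a j ^ q) ^ (1/q) ≤ 2 * M :=
    sum_rpow_rpow_inv_le_two_mul (by linarith) hM hk sdiff_subset
      (fun j hj => ha' j (mem_sdiff.1 hj).1)
      fun j hj => le_ciSup_of_mem (fun j : ℕ => (k:ℝ) ^ (1/(2*q)) * (j:ℝ) ^ (1/(2*q)) * a j)
        (by simp at hj ⊢; omega)
  calc (∑ j ∈ Icc 1 k, a j ^ q) ^ (1/q)
      = (∑ j ∈ Icc 1 k ∩ Icc 1 μ, a j ^ q + ∑ j ∈ Icc 1 k \ Icc 1 μ, a j ^ q) ^ (1/q) := by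
        rw [sum_inter_add_sum_sdiff]
    _ ≤ (∑ j ∈ Icc 1 k ∩ Icc 1 μ, a j ^ q) ^ (1/q) + (∑ j ∈ Icc 1 k \ Icc 1 μ, a j ^ q) ^ (1/q) :=
        Real.rpow_add_le_add_rpow
          (sum_nonneg fun j hj => Real.rpow_nonneg (ha' j (mem_inter.1 hj).1) _)
          (sum_nonneg fun j hj => Real.rpow_nonneg (ha' j (mem_sdiff.1 hj).1) _)
          (by positivity) ((div_le_one (by positivity)).2 (by linarith))
    _ ≤ _ := add_le_add hhead htail
end
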